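/- If B ⊇ C is an H-separable extension (B ⊗_C B is isomorphic to a direct summand of B^m as B-B-bimodules for some m), then for any tower A ⊇ B ⊇ C, the B-A-bimodule B ⊗_C A is isomorphic to a direct summand of A^m as B-A-bimodules (left relative H-separability), and the A-B-bimodule A ⊗_C B is isomorphic to a direct summand of A^m as A-B-bimodules (right relative H-separability). -/

import Mathlib

/-!  A noncommutative relative tensor product `L ⊗_C R` for a ring `C` mapping
into rings `L` (acting on the right through `f`) and `R` (acting on the left
through `g`), together with the outer left `L`-action `lact`, the outer right
`R`-action `ract`, a lifting principle for balanced biadditive maps, and the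
multiplication map. -/

open scoped TensorProduct

noncomputable section
namespace NCT

variable {C L R : Type*} [Ring C] [Ring L] [Ring R]

/-- The submodule of relations `(l * f c) ⊗ r - l ⊗ (g c * r)`. -/
def rel (f : C →+* L) (g : C →+* R) : Submodule ℤ (L ⊗[ℤ] R) :=
  Submodule.span ℤ
    {x | ∃ (l : L) (c : C) (r : R), x = (l * f c) ⊗ₜ[ℤ] r - l ⊗ₜ[ℤ] (g c * r)}

/-- The relative tensor product `L ⊗_C R`. -/
def Tens (f : C →+* L) (g : C →+* R) : Type _ := (L ⊗[ℤ] R) ⧸ rel f g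

instance (f : C →+* L) (g : C →+* R) : AddCommGroup (Tens f g) :=
  inferInstanceAs (AddCommGroup ((L ⊗[ℤ] R) ⧸ rel f g))

variable (f : C →+* L) (g : C →+* R)

/-- The canonical image of `l ⊗ r` in `L ⊗_C R`. -/
def tmul (l : L) (r : R) : Tens f g := Submodule.Quotient.mk (l ⊗ₜ[ℤ] r)

lemma tmul_rel (l : L) (c : C) (r : R) :
    tmul f g (l * f c) r = tmul f g l (g c * r) := by
  refine (Submodule.Quotient.eq _).2 ?_
  exact Submodule.subset_span ⟨l, c, r, rfl⟩

lemma tmul_add_left (l l' : L) (r : R) :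
    tmul f g (l + l') r = tmul f g l r + tmul f g l' r := by
  show Submodule.Quotient.mk _ = _
  rw [TensorProduct.add_tmul, Submodule.Quotient.mk_add]; rfl

lemma tmul_add_right (l : L) (r r' : R) :
    tmul f g l (r + r') = tmul f g l r + tmul f g l r' := by
  show Submodule.Quotient.mk _ = _
  rw [TensorProduct.tmul_add, Submodule.Quotient.mk_add]; rfl

/-- Package a biadditive map as a bundled `AddMonoidHom`-valued hom. -/
def mkBilin {M N P : Type*} [AddCommGroup M] [AddCommGroup N] [AddCommGroup P]
    (φ : M → N → P)
    (h1 : ∀ m m' n, φ (m + m') n = φ m n + φ m' n)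
    (h2 : ∀ m n n', φ m (n + n') = φ m n + φ m n') : M →+ N →+ P :=
  AddMonoidHom.mk' (fun m => AddMonoidHom.mk' (φ m) (h2 m))
    (fun m m' => by ext n; exact h1 m m' n)

@[simp] lemma mkBilin_apply {M N P : Type*} [AddCommGroup M] [AddCommGroup N] [AddCommGroup P]
    (φ : M → N → P) (h1 h2) (m : M) (n : N) : mkBilin φ h1 h2 m n = φ m n := rfl

/-- Lift a balanced biadditive map to the relative tensor product. -/
def lift {P : Type*} [AddCommGroup P] (φ : L →+ R →+ P)
    (hbal : ∀ l c r, φ (l * f c) r = φ l (g c * r)) : Tens f g →+ P :=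
  (Submodule.liftQ (rel f g)
    (TensorProduct.liftAddHom φ (by
      intro n l r
      simp only [AddMonoidHom.map_zsmul, AddMonoidHom.smul_apply]) ).toIntLinearMap
    (by
      rw [rel, Submodule.span_le]
      rintro x ⟨l, c, r, rfl⟩
      simp only [SetLike.mem_coe, LinearMap.mem_ker, AddMonoidHom.coe_toIntLinearMap,
        map_sub, TensorProduct.liftAddHom_tmul]
      rw [hbal, sub_self])).toAddMonoidHom

@[simp] lemma lift_tmul {P : Type*} [AddCommGroup P] (φ : L →+ R →+ P)
    (hbal : ∀ l c r, φ (l * f c) r = φ l (g c * r)) (l : L) (r : R) :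
    lift f g φ hbal (tmul f g l r) = φ l r := rfl

/-- The outer left action of `L` on `L ⊗_C R`. -/
def lact (l : L) : Tens f g →+ Tens f g :=
  lift f g (mkBilin (fun l' r => tmul f g (l * l') r)
      (fun a b r => by rw [mul_add, tmul_add_left])
      (fun a r s => by rw [tmul_add_right]))
    (fun l' c r => by simp only [mkBilin_apply]; rw [← mul_assoc, tmul_rel])

@[simp] lemma lact_tmul (l l' : L) (r : R) :
    lact f g l (tmul f g l' r) = tmul f g (l * l') r := rfl

/-- The outer right action of `R` on `L ⊗_C R`. -/
def ract (r : R) : Tens f g →+ Tens f g :=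
  lift f g (mkBilin (fun l' r' => tmul f g l' (r' * r))
      (fun a b r' => by rw [tmul_add_left])
      (fun a r' s => by rw [add_mul, tmul_add_right]))
    (fun l' c r' => by simp only [mkBilin_apply]; rw [tmul_rel, mul_assoc])

@[simp] lemma ract_tmul (r r' : R) (l : L) :
    ract f g r (tmul f g l r') = tmul f g l (r' * r) := rfl

/-- The map induced on relative tensor products by a ring map on the left factor. -/
def mapLeft {L' : Type*} [Ring L'] (h : L →+* L') :
    Tens f g →+ Tens (h.comp f) g :=
  lift f g (mkBilin (fun l r => tmul (h.comp f) g (h l) r)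
      (fun a b r => by rw [map_add, tmul_add_left])
      (fun a r s => by rw [tmul_add_right]))
    (fun l c r => by
      simp only [mkBilin_apply, map_mul]
      exact tmul_rel (h.comp f) g (h l) c r)

@[simp] lemma mapLeft_tmul {L' : Type*} [Ring L'] (h : L →+* L') (l : L) (r : R) :
    mapLeft f g h (tmul f g l r) = tmul (h.comp f) g (h l) r := rfl

/-- The multiplication map `L ⊗_C R → R`, `l ⊗ r ↦ jl l * r`, for a ring map
`jl : L → R` compatible with the two maps from `C`. -/
def mulMap (jl : L →+* R) (hcomp : ∀ c, jl (f c) = g c) : Tens f g →+ R :=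
  lift f g (mkBilin (fun l r => jl l * r)
      (fun a b r => by rw [map_add, add_mul])
      (fun a r s => by rw [mul_add]))
    (fun l c r => by simp only [mkBilin_apply]; rw [map_mul, hcomp, mul_assoc])

@[simp] lemma mulMap_tmul (jl : L →+* R) (hcomp : ∀ c, jl (f c) = g c) (l : L) (r : R) :
    mulMap f g jl hcomp (tmul f g l r) = jl l * r := rfl

/-- Induction principle: every element of `L ⊗_C R` is built from `tmul`s. -/
lemma tens_induction {p : Tens f g → Prop} (zero : p 0)
    (tm : ∀ l r, p (tmul f g l r)) (add : ∀ x y, p x → p y → p (x + y)) :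
    ∀ x, p x := by
  intro x
  obtain ⟨y, rfl⟩ := Submodule.Quotient.mk_surjective _ x
  induction y using TensorProduct.induction_on with
  | zero => exact zero
  | tmul l r => exact tm l r
  | add a b ha hb =>
      rw [Submodule.Quotient.mk_add]
      exact add _ _ ha hb

end NCT
end

noncomputable section
open NCT

/-- The tower `A ⊇ B ⊇ C` (given by injective ring maps `ι : C → B`, `j : B → A`) is
*left relative H-separable*: `B ⊗_C A ⊕ * ≅ A^n` as `B`-`A`-bimodules. -/
def LeftRelHSep {C B A : Type*} [Ring C] [Ring B] [Ring A]
    (ι : C →+* B) (j : B →+* A) (n : ℕ) : Prop :=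
  ∃ (i : Tens ι (j.comp ι) →+ (Fin n → A)) (p : (Fin n → A) →+ Tens ι (j.comp ι)),
    (∀ (b : B) x, i (lact ι (j.comp ι) b x) = fun k => j b * i x k) ∧
    (∀ (a : A) x, i (ract ι (j.comp ι) a x) = fun k => i x k * a) ∧
    (∀ (b : B) v, p (fun k => j b * v k) = lact ι (j.comp ι) b (p v)) ∧
    (∀ (a : A) v, p (fun k => v k * a) = ract ι (j.comp ι) a (p v)) ∧
    ∀ x, p (i x) = x

/-- `B` is a *left relative separable extension of `C` in `A`*: the multiplication map
`μ : B ⊗_C A → A` splits as a `B`-`A`-bimodule epimorphism. -/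
def LeftRelSep {C B A : Type*} [Ring C] [Ring B] [Ring A]
    (ι : C →+* B) (j : B →+* A) : Prop :=
  ∃ σ : A →+ Tens ι (j.comp ι),
    (∀ (b : B) (a : A), σ (j b * a) = lact ι (j.comp ι) b (σ a)) ∧
    (∀ (a a' : A), σ (a * a') = ract ι (j.comp ι) a' (σ a)) ∧
    ∀ a, mulMap ι (j.comp ι) j (fun _ => rfl) (σ a) = a

/-- `B ⊇ C` is a separable extension: there is a `B`-central element
`e ∈ B ⊗_C B` with `μ(e) = 1`. -/
def IsSepExt {C B : Type*} [Ring C] [Ring B] (ι : C →+* B) : Prop :=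
  ∃ e : Tens ι ι, (∀ b : B, lact ι ι b e = ract ι ι b e) ∧
    mulMap ι ι (RingHom.id B) (fun _ => rfl) e = 1

/-! Applying `− ⊗_B A` to a `B`-`B`-bimodule splitting `B ⊗_C B ⇄ B^m` gives a
`B`-`A`-bimodule splitting `B ⊗_C A ≅ (B ⊗_C B) ⊗_B A ⇄ B^m ⊗_B A ≅ A^m`; explicitly
`i` becomes `b ⊗ a ↦ j (i (b ⊗ 1)) * a` and `p` becomes `v ↦ ∑ₖ p(eₖ) · vₖ`. The second map is
left `B`-linear because the standard basis vectors `eₖ` of `B^m` are central. Applying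
`A ⊗_B −` instead gives the `A`-`B`-bimodule splitting of `A ⊗_C B`. -/

namespace NCT

section Basic

variable {C L R : Type*} [Ring C] [Ring L] [Ring R] (f : C →+* L) (g : C →+* R)

lemma hom_ext {P : Type*} [AddCommGroup P] {φ ψ : Tens f g →+ P}
    (h : ∀ l r, φ (tmul f g l r) = ψ (tmul f g l r)) : φ = ψ := by
  ext x
  induction x using tens_induction with
  | zero => simp only [map_zero]
  | tm l r => exact h l r
  | add x y hx hy => rw [map_add, map_add, hx, hy]

lemma lact_mul (l l' : L) (x : Tens f g) :
    lact f g (l * l') x = lact f g l (lact f g l' x) :=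
  DFunLike.congr_fun (hom_ext f g (ψ := (lact f g l).comp (lact f g l'))
    fun _ _ => by simp only [lact_tmul, AddMonoidHom.comp_apply, mul_assoc]) x

lemma ract_mul (r r' : R) (x : Tens f g) :
    ract f g (r * r') x = ract f g r' (ract f g r x) :=
  DFunLike.congr_fun (hom_ext f g (ψ := (ract f g r').comp (ract f g r))
    fun _ _ => by simp only [ract_tmul, AddMonoidHom.comp_apply, mul_assoc]) x

lemma lact_ract_comm (l : L) (r : R) (x : Tens f g) :
    lact f g l (ract f g r x) = ract f g r (lact f g l x) :=
  DFunLike.congr_fun (hom_ext f g (φ := (lact f g l).comp (ract f g r))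
    (ψ := (ract f g r).comp (lact f g l))
    fun _ _ => by simp only [lact_tmul, ract_tmul, AddMonoidHom.comp_apply]) x

lemma lact_add (l l' : L) (x : Tens f g) :
    lact f g (l + l') x = lact f g l x + lact f g l' x :=
  DFunLike.congr_fun (hom_ext f g (ψ := lact f g l + lact f g l')
    fun _ _ => by simp only [lact_tmul, AddMonoidHom.add_apply, add_mul, tmul_add_left]) x

lemma ract_add (r r' : R) (x : Tens f g) :
    ract f g (r + r') x = ract f g r x + ract f g r' x :=
  DFunLike.congr_fun (hom_ext f g (ψ := ract f g r + ract f g r')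
    fun _ _ => by simp only [ract_tmul, AddMonoidHom.add_apply, mul_add, tmul_add_right]) x

def mapRight {R' : Type*} [Ring R'] (h : R →+* R') :
    Tens f g →+ Tens f (h.comp g) :=
  lift f g (mkBilin (fun l r => tmul f (h.comp g) l (h r))
      (fun _ _ _ => by rw [tmul_add_left])
      (fun _ _ _ => by rw [map_add, tmul_add_right]))
    (fun l c r => by
      simp only [mkBilin_apply, map_mul]
      exact tmul_rel f (h.comp g) l c (h r))

@[simp] lemma mapRight_tmul {R' : Type*} [Ring R'] (h : R →+* R') (l : L) (r : R) :
    mapRight f g h (tmul f g l r) = tmul f (h.comp g) l (h r) := rfl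

lemma mapRight_lact {R' : Type*} [Ring R'] (h : R →+* R') (l : L) (x : Tens f g) :
    mapRight f g h (lact f g l x) = lact f (h.comp g) l (mapRight f g h x) :=
  DFunLike.congr_fun (hom_ext f g (φ := (mapRight f g h).comp (lact f g l))
    (ψ := (lact f (h.comp g) l).comp (mapRight f g h))
    fun _ _ => by simp only [AddMonoidHom.comp_apply, lact_tmul, mapRight_tmul]) x

lemma mapRight_ract {R' : Type*} [Ring R'] (h : R →+* R') (r : R) (x : Tens f g) :
    mapRight f g h (ract f g r x) = ract f (h.comp g) (h r) (mapRight f g h x) :=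
  DFunLike.congr_fun (hom_ext f g (φ := (mapRight f g h).comp (ract f g r))
    (ψ := (ract f (h.comp g) (h r)).comp (mapRight f g h))
    fun _ _ => by simp only [AddMonoidHom.comp_apply, ract_tmul, mapRight_tmul, map_mul]) x

lemma mapLeft_lact {L' : Type*} [Ring L'] (h : L →+* L') (l : L) (x : Tens f g) :
    mapLeft f g h (lact f g l x) = lact (h.comp f) g (h l) (mapLeft f g h x) :=
  DFunLike.congr_fun (hom_ext f g (φ := (mapLeft f g h).comp (lact f g l))
    (ψ := (lact (h.comp f) g (h l)).comp (mapLeft f g h))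
    fun _ _ => by simp only [AddMonoidHom.comp_apply, lact_tmul, mapLeft_tmul, map_mul]) x

lemma mapLeft_ract {L' : Type*} [Ring L'] (h : L →+* L') (r : R) (x : Tens f g) :
    mapLeft f g h (ract f g r x) = ract (h.comp f) g r (mapLeft f g h x) :=
  DFunLike.congr_fun (hom_ext f g (φ := (mapLeft f g h).comp (ract f g r))
    (ψ := (ract (h.comp f) g r).comp (mapLeft f g h))
    fun _ _ => by simp only [AddMonoidHom.comp_apply, ract_tmul, mapLeft_tmul]) x

end Basic

section Vectors

variable {C L R : Type*} [Ring C] [Ring L] [Ring R] (f : C →+* L) (g : C →+* R) {m : ℕ}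

lemma eq_sum_ract_single (ψ : (Fin m → R) →+ Tens f g)
    (hψ : ∀ (r : R) v, ψ (fun k => v k * r) = ract f g r (ψ v)) (v : Fin m → R) :
    ψ v = ∑ k, ract f g (v k) (ψ (Pi.single k 1)) := by
  conv_lhs => rw [← Finset.univ_sum_single v]
  rw [map_sum]
  refine Finset.sum_congr rfl fun k _ => ?_
  rw [← hψ]
  congr 1
  funext l
  simp only [Pi.single_apply, ite_mul, one_mul, zero_mul]

lemma eq_sum_lact_single (ψ : (Fin m → L) →+ Tens f g)
    (hψ : ∀ (l : L) v, ψ (fun k => l * v k) = lact f g l (ψ v)) (v : Fin m → L) :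
    ψ v = ∑ k, lact f g (v k) (ψ (Pi.single k 1)) := by
  conv_lhs => rw [← Finset.univ_sum_single v]
  rw [map_sum]
  refine Finset.sum_congr rfl fun k _ => ?_
  rw [← hψ]
  congr 1
  funext l
  simp only [Pi.single_apply, mul_ite, mul_one, mul_zero]

end Vectors

lemma single_one_mul_comm {R : Type*} [Ring R] {m : ℕ} (k : Fin m) (r : R) :
    (fun l => (Pi.single k 1 : Fin m → R) l * r) = fun l => r * (Pi.single k 1 : Fin m → R) l := by
  funext l
  simp only [Pi.single_apply, ite_mul, mul_ite, one_mul, mul_one, zero_mul, mul_zero]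

section RTensor

variable {C L R R' : Type*} [Ring C] [Ring L] [Ring R] [Ring R'] (f : C →+* L) (g : C →+* R)
  (h : R →+* R') {m : ℕ}

/-- `φ ⊗_R R'`, read through `(L ⊗_C R) ⊗_R R' ≅ L ⊗_C R'` and `R^m ⊗_R R' ≅ R'^m`. -/
def rTensorFrom (φ : Tens f g →+ (Fin m → R))
    (hφ : ∀ (r : R) x, φ (ract f g r x) = fun k => φ x k * r) :
    Tens f (h.comp g) →+ (Fin m → R') :=
  lift f (h.comp g)
    (mkBilin (fun l r' k => h (φ (tmul f g l 1) k) * r')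
      (fun _ _ _ => by funext k; simp only [tmul_add_left, map_add, Pi.add_apply, add_mul])
      (fun _ _ _ => by funext k; simp only [Pi.add_apply, mul_add]))
    (fun l c r' => by
      have hbal : tmul f g (l * f c) 1 = ract f g (g c) (tmul f g l 1) := by
        rw [ract_tmul, tmul_rel, one_mul, mul_one]
      funext k
      simp only [mkBilin_apply, hbal, hφ, map_mul, RingHom.comp_apply, mul_assoc])

@[simp] lemma rTensorFrom_tmul (φ : Tens f g →+ (Fin m → R)) (hφ) (l : L) (r' : R') :
    rTensorFrom f g h φ hφ (tmul f (h.comp g) l r') = fun k => h (φ (tmul f g l 1) k) * r' :=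
  rfl

lemma rTensorFrom_ract (φ : Tens f g →+ (Fin m → R)) (hφ) (r' : R') (x : Tens f (h.comp g)) :
    rTensorFrom f g h φ hφ (ract f (h.comp g) r' x) =
      fun k => rTensorFrom f g h φ hφ x k * r' := by
  induction x using tens_induction with
  | zero => funext k; simp only [map_zero, Pi.zero_apply, zero_mul]
  | tm l r => funext k; simp only [ract_tmul, rTensorFrom_tmul, mul_assoc]
  | add x y hx hy => funext k; simp only [map_add, Pi.add_apply, hx, hy, add_mul]

/-- `ψ ⊗_R R'`, read through the same identifications as `rTensorFrom`. -/
def rTensorInto (ψ : (Fin m → R) →+ Tens f g) : (Fin m → R') →+ Tens f (h.comp g) :=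
  AddMonoidHom.mk' (fun v => ∑ k, ract f (h.comp g) (v k) (mapRight f g h (ψ (Pi.single k 1))))
    (fun v w => by simp only [Pi.add_apply, ract_add, Finset.sum_add_distrib])

lemma rTensorInto_apply (ψ : (Fin m → R) →+ Tens f g) (v : Fin m → R') :
    rTensorInto f g h ψ v = ∑ k, ract f (h.comp g) (v k) (mapRight f g h (ψ (Pi.single k 1))) :=
  rfl

lemma rTensorInto_ract (ψ : (Fin m → R) →+ Tens f g) (r' : R') (v : Fin m → R') :
    rTensorInto f g h ψ (fun k => v k * r') = ract f (h.comp g) r' (rTensorInto f g h ψ v) := by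
  simp only [rTensorInto_apply, map_sum, ract_mul]

lemma rTensorInto_comp_map (ψ : (Fin m → R) →+ Tens f g)
    (hψ : ∀ (r : R) v, ψ (fun k => v k * r) = ract f g r (ψ v)) (v : Fin m → R) :
    rTensorInto f g h ψ (fun k => h (v k)) = mapRight f g h (ψ v) := by
  simp only [eq_sum_ract_single f g ψ hψ v, map_sum, rTensorInto_apply, mapRight_ract]

lemma rTensorInto_rTensorFrom (φ : Tens f g →+ (Fin m → R)) (hφ) (ψ : (Fin m → R) →+ Tens f g)
    (hψ : ∀ (r : R) v, ψ (fun k => v k * r) = ract f g r (ψ v)) (hψφ : ∀ x, ψ (φ x) = x)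
    (x : Tens f (h.comp g)) :
    rTensorInto f g h ψ (rTensorFrom f g h φ hφ x) = x := by
  induction x using tens_induction with
  | zero => simp only [map_zero]
  | tm l r' =>
    rw [rTensorFrom_tmul, rTensorInto_ract f g h ψ r' (fun k => h (φ (tmul f g l 1) k)),
      rTensorInto_comp_map f g h ψ hψ, hψφ, mapRight_tmul, ract_tmul, map_one, one_mul]
  | add x y hx hy => rw [map_add, map_add, hx, hy]

end RTensor

section LTensor

variable {C L L' R : Type*} [Ring C] [Ring L] [Ring L'] [Ring R] (f : C →+* L) (g : C →+* R)
  (h : L →+* L') {m : ℕ}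

/-- `L' ⊗_L φ`, read through `L' ⊗_L (L ⊗_C R) ≅ L' ⊗_C R` and `L' ⊗_L L^m ≅ L'^m`. -/
def lTensorFrom (φ : Tens f g →+ (Fin m → L))
    (hφ : ∀ (l : L) x, φ (lact f g l x) = fun k => l * φ x k) :
    Tens (h.comp f) g →+ (Fin m → L') :=
  lift (h.comp f) g
    (mkBilin (fun l' r k => l' * h (φ (tmul f g 1 r) k))
      (fun _ _ _ => by funext k; simp only [Pi.add_apply, add_mul])
      (fun _ _ _ => by funext k; simp only [tmul_add_right, map_add, Pi.add_apply, mul_add]))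
    (fun l' c r => by
      have hbal : tmul f g 1 (g c * r) = lact f g (f c) (tmul f g 1 r) := by
        rw [lact_tmul, ← tmul_rel, one_mul, mul_one]
      funext k
      simp only [mkBilin_apply, hbal, hφ, map_mul, RingHom.comp_apply, mul_assoc])

@[simp] lemma lTensorFrom_tmul (φ : Tens f g →+ (Fin m → L)) (hφ) (l' : L') (r : R) :
    lTensorFrom f g h φ hφ (tmul (h.comp f) g l' r) = fun k => l' * h (φ (tmul f g 1 r) k) :=
  rfl

lemma lTensorFrom_lact (φ : Tens f g →+ (Fin m → L)) (hφ) (l' : L') (x : Tens (h.comp f) g) :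
    lTensorFrom f g h φ hφ (lact (h.comp f) g l' x) =
      fun k => l' * lTensorFrom f g h φ hφ x k := by
  induction x using tens_induction with
  | zero => funext k; simp only [map_zero, Pi.zero_apply, mul_zero]
  | tm l r => funext k; simp only [lact_tmul, lTensorFrom_tmul, mul_assoc]
  | add x y hx hy => funext k; simp only [map_add, Pi.add_apply, hx, hy, mul_add]

/-- `L' ⊗_L ψ`, read through the same identifications as `lTensorFrom`. -/
def lTensorInto (ψ : (Fin m → L) →+ Tens f g) : (Fin m → L') →+ Tens (h.comp f) g :=
  AddMonoidHom.mk' (fun v => ∑ k, lact (h.comp f) g (v k) (mapLeft f g h (ψ (Pi.single k 1))))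
    (fun v w => by simp only [Pi.add_apply, lact_add, Finset.sum_add_distrib])

lemma lTensorInto_apply (ψ : (Fin m → L) →+ Tens f g) (v : Fin m → L') :
    lTensorInto f g h ψ v = ∑ k, lact (h.comp f) g (v k) (mapLeft f g h (ψ (Pi.single k 1))) :=
  rfl

lemma lTensorInto_lact (ψ : (Fin m → L) →+ Tens f g) (l' : L') (v : Fin m → L') :
    lTensorInto f g h ψ (fun k => l' * v k) = lact (h.comp f) g l' (lTensorInto f g h ψ v) := by
  simp only [lTensorInto_apply, map_sum, lact_mul]

lemma lTensorInto_comp_map (ψ : (Fin m → L) →+ Tens f g)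
    (hψ : ∀ (l : L) v, ψ (fun k => l * v k) = lact f g l (ψ v)) (v : Fin m → L) :
    lTensorInto f g h ψ (fun k => h (v k)) = mapLeft f g h (ψ v) := by
  simp only [eq_sum_lact_single f g ψ hψ v, map_sum, lTensorInto_apply, mapLeft_lact]

lemma lTensorInto_lTensorFrom (φ : Tens f g →+ (Fin m → L)) (hφ) (ψ : (Fin m → L) →+ Tens f g)
    (hψ : ∀ (l : L) v, ψ (fun k => l * v k) = lact f g l (ψ v)) (hψφ : ∀ x, ψ (φ x) = x)
    (x : Tens (h.comp f) g) :
    lTensorInto f g h ψ (lTensorFrom f g h φ hφ x) = x := by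
  induction x using tens_induction with
  | zero => simp only [map_zero]
  | tm l' r =>
    rw [lTensorFrom_tmul, lTensorInto_lact f g h ψ l' (fun k => h (φ (tmul f g 1 r) k)),
      lTensorInto_comp_map f g h ψ hψ, hψφ, mapLeft_tmul, lact_tmul, map_one, mul_one]
  | add x y hx hy => rw [map_add, map_add, hx, hy]

end LTensor

section Bimodule

variable {C B B' : Type*} [Ring C] [Ring B] [Ring B'] (f g : C →+* B) (h : B →+* B') {m : ℕ}

lemma lact_single_eq_ract_single (ψ : (Fin m → B) →+ Tens f g)
    (hψl : ∀ (b : B) v, ψ (fun k => b * v k) = lact f g b (ψ v))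
    (hψr : ∀ (b : B) v, ψ (fun k => v k * b) = ract f g b (ψ v)) (b : B) (k : Fin m) :
    lact f g b (ψ (Pi.single k 1)) = ract f g b (ψ (Pi.single k 1)) := by
  rw [← hψl, ← hψr, single_one_mul_comm]

lemma rTensorFrom_lact (φ : Tens f g →+ (Fin m → B)) (hφr)
    (hφl : ∀ (b : B) x, φ (lact f g b x) = fun k => b * φ x k) (b : B) (x : Tens f (h.comp g)) :
    rTensorFrom f g h φ hφr (lact f (h.comp g) b x) =
      fun k => h b * rTensorFrom f g h φ hφr x k := by
  induction x using tens_induction with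
  | zero => funext k; simp only [map_zero, Pi.zero_apply, mul_zero]
  | tm l r' =>
    funext k
    simp only [lact_tmul, rTensorFrom_tmul]
    rw [← lact_tmul f g b l 1]
    simp only [hφl, map_mul, mul_assoc]
  | add x y hx hy => funext k; simp only [map_add, Pi.add_apply, hx, hy, mul_add]

lemma rTensorInto_lact (ψ : (Fin m → B) →+ Tens f g)
    (hψl : ∀ (b : B) v, ψ (fun k => b * v k) = lact f g b (ψ v))
    (hψr : ∀ (b : B) v, ψ (fun k => v k * b) = ract f g b (ψ v)) (b : B) (v : Fin m → B') :
    rTensorInto f g h ψ (fun k => h b * v k) = lact f (h.comp g) b (rTensorInto f g h ψ v) := by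
  simp only [rTensorInto_apply, map_sum, ract_mul, ← mapRight_ract,
    ← lact_single_eq_ract_single f g ψ hψl hψr, mapRight_lact, lact_ract_comm]

lemma lTensorFrom_ract (φ : Tens f g →+ (Fin m → B)) (hφl)
    (hφr : ∀ (b : B) x, φ (ract f g b x) = fun k => φ x k * b) (b : B) (x : Tens (h.comp f) g) :
    lTensorFrom f g h φ hφl (ract (h.comp f) g b x) =
      fun k => lTensorFrom f g h φ hφl x k * h b := by
  induction x using tens_induction with
  | zero => funext k; simp only [map_zero, Pi.zero_apply, zero_mul]
  | tm l' r =>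
    funext k
    simp only [ract_tmul, lTensorFrom_tmul]
    rw [← ract_tmul f g b r 1]
    simp only [hφr, map_mul, mul_assoc]
  | add x y hx hy => funext k; simp only [map_add, Pi.add_apply, hx, hy, add_mul]

lemma lTensorInto_ract (ψ : (Fin m → B) →+ Tens f g)
    (hψl : ∀ (b : B) v, ψ (fun k => b * v k) = lact f g b (ψ v))
    (hψr : ∀ (b : B) v, ψ (fun k => v k * b) = ract f g b (ψ v)) (b : B) (v : Fin m → B') :
    lTensorInto f g h ψ (fun k => v k * h b) = ract (h.comp f) g b (lTensorInto f g h ψ v) := by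
  simp only [lTensorInto_apply, map_sum, lact_mul, ← mapLeft_lact,
    lact_single_eq_ract_single f g ψ hψl hψr, mapLeft_ract, lact_ract_comm]

end Bimodule

end NCT

theorem relHSep_of_hSep_general
    {C B A : Type*} [Ring C] [Ring B] [Ring A]
    (ι : C →+* B) (j : B →+* A)
    (m : ℕ)
    (hH : ∃ (i : Tens ι ι →+ (Fin m → B)) (p : (Fin m → B) →+ Tens ι ι),
      (∀ (b : B) x, i (lact ι ι b x) = fun k => b * i x k) ∧
      (∀ (b : B) x, i (ract ι ι b x) = fun k => i x k * b) ∧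
      (∀ (b : B) v, p (fun k => b * v k) = lact ι ι b (p v)) ∧
      (∀ (b : B) v, p (fun k => v k * b) = ract ι ι b (p v)) ∧
      ∀ x, p (i x) = x) :
    LeftRelHSep ι j m ∧
    (∃ (i : Tens (j.comp ι) ι →+ (Fin m → A)) (p : (Fin m → A) →+ Tens (j.comp ι) ι),
      (∀ (a : A) x, i (lact (j.comp ι) ι a x) = fun k => a * i x k) ∧
      (∀ (b : B) x, i (ract (j.comp ι) ι b x) = fun k => i x k * j b) ∧
      (∀ (a : A) v, p (fun k => a * v k) = lact (j.comp ι) ι a (p v)) ∧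
      (∀ (b : B) v, p (fun k => v k * j b) = ract (j.comp ι) ι b (p v)) ∧
      ∀ x, p (i x) = x) := by
  obtain ⟨i, p, hil, hir, hpl, hpr, hpi⟩ := hH
  exact
    ⟨⟨rTensorFrom ι ι j i hir, rTensorInto ι ι j p, rTensorFrom_lact ι ι j i hir hil,
      rTensorFrom_ract ι ι j i hir, rTensorInto_lact ι ι j p hpl hpr, rTensorInto_ract ι ι j p,
      rTensorInto_rTensorFrom ι ι j i hir p hpr hpi⟩,
    ⟨lTensorFrom ι ι j i hil, lTensorInto ι ι j p, lTensorFrom_lact ι ι j i hil,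
      lTensorFrom_ract ι ι j i hil hir, lTensorInto_lact ι ι j p, lTensorInto_ract ι ι j p hpl hpr,
      lTensorInto_lTensorFrom ι ι j i hil p hpl hpi⟩⟩

/-- if `B ⊇ C` is H-separable (`B ⊗_C B ⊕ * ≅ B^m` as `B`-`B`-bimodules),
then for any tower `A ⊇ B ⊇ C`, `B ⊗_C A ⊕ * ≅ A^m` as `B`-`A`-bimodules and
`A ⊗_C B ⊕ * ≅ A^m` as `A`-`B`-bimodules. -/
theorem relHSep_of_hSep
    {C B A : Type*} [Ring C] [Ring B] [Ring A]
    (ι : C →+* B) (j : B →+* A)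
    (hι : Function.Injective ι) (hj : Function.Injective j) (m : ℕ)
    (hH : ∃ (i : Tens ι ι →+ (Fin m → B)) (p : (Fin m → B) →+ Tens ι ι),
      (∀ (b : B) x, i (lact ι ι b x) = fun k => b * i x k) ∧
      (∀ (b : B) x, i (ract ι ι b x) = fun k => i x k * b) ∧
      (∀ (b : B) v, p (fun k => b * v k) = lact ι ι b (p v)) ∧
      (∀ (b : B) v, p (fun k => v k * b) = ract ι ι b (p v)) ∧
      ∀ x, p (i x) = x) :
    LeftRelHSep ι j m ∧
    (∃ (i : Tens (j.comp ι) ι →+ (Fin m → A)) (p : (Fin m → A) →+ Tens (j.comp ι) ι),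
      (∀ (a : A) x, i (lact (j.comp ι) ι a x) = fun k => a * i x k) ∧
      (∀ (b : B) x, i (ract (j.comp ι) ι b x) = fun k => i x k * j b) ∧
      (∀ (a : A) v, p (fun k => a * v k) = lact (j.comp ι) ι a (p v)) ∧
      (∀ (b : B) v, p (fun k => v k * j b) = ract (j.comp ι) ι b (p v)) ∧
      ∀ x, p (i x) = x) :=
  relHSep_of_hSep_general ι j m hH

end
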